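/- Let 1 < β < 2 and L > 0. There exists a constant c₂ > 0, depending only on β and L (in particular independent of N), such that for every integer N ≥ 3, with mesh size h = L/N, and every nonzero grid function v one has (−δ^β_{x,+} v, v) = (−δ^β_{x,-} v, v) > c₂ · ln 2 · ‖v‖². -/

import Mathlib

open Finset

/-- The coefficients `g_k^{(γ)}`: `g_0 = 1`, `g_k = (1 - (γ+1)/k) g_{k-1}` for `k ≥ 1`. -/
noncomputable def gcoef (γ : ℝ) : ℕ → ℝ
  | 0 => 1
  | k + 1 => (1 - (γ + 1) / (k + 1)) * gcoef γ k

/-- The coefficients `ω_k^{(γ)}`: `ω_0 = (γ/2) g_0` and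
`ω_k = (γ/2) g_k + ((2-γ)/2) g_{k-1}` for `k ≥ 1`. -/
noncomputable def wcoef (γ : ℝ) : ℕ → ℝ
  | 0 => γ / 2 * gcoef γ 0
  | k + 1 => γ / 2 * gcoef γ (k + 1) + (2 - γ) / 2 * gcoef γ k

/-- Discrete inner product `(u,v) = h ∑_{i=1}^{N-1} u_i v_i`. -/
noncomputable def ip (N : ℕ) (h : ℝ) (u v : ℕ → ℝ) : ℝ :=
  h * ∑ i ∈ Finset.Icc 1 (N - 1), u i * v i

/-- Discrete `L₂`-norm `‖v‖ = √(v,v)`. -/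
noncomputable def gnorm (N : ℕ) (h : ℝ) (v : ℕ → ℝ) : ℝ :=
  Real.sqrt (ip N h v v)

/-- `(δ^γ_{x,+} v)_i = h^{-γ} ∑_{k=0}^{i+1} ω_k^{(γ)} v_{i-k+1}`. -/
noncomputable def dplus (γ : ℝ) (h : ℝ) (v : ℕ → ℝ) (i : ℕ) : ℝ :=
  h ^ (-γ) * ∑ k ∈ Finset.range (i + 2), wcoef γ k * v (i + 1 - k)

/-- `(δ^γ_{x,-} v)_i = h^{-γ} ∑_{k=0}^{N-i+1} ω_k^{(γ)} v_{i+k-1}`. -/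
noncomputable def dminus (γ : ℝ) (N : ℕ) (h : ℝ) (v : ℕ → ℝ) (i : ℕ) : ℝ :=
  h ^ (-γ) * ∑ k ∈ Finset.range (N - i + 2), wcoef γ k * v (i + k - 1)

/-!
With the lower Hessenberg Toeplitz matrix `T i j = ω_{i+1-j}` one has `δ^β_{x,+} = h^{-β} T` and
`δ^β_{x,-} = h^{-β} Tᵀ` on grid functions vanishing at `0` and `N`, so both quadratic forms equal
`-h^{1-β} vᵀ T v`. For `1 ≤ β ≤ 2` the off-diagonal entries of `T + Tᵀ` are nonnegative
(`ω_k ≥ 0` for `k ≥ 3` and `ω_0 + ω_2 ≥ 0`), hence `2 vᵀ T v ≤ ∑ᵢ (row sum + column sum)ᵢ vᵢ²`,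
and each of these sums is at most `S_N = ∑_{k ≤ N} ω_k`. Summing the recurrences gives
`S_N = (β/2) g^{(β-1)}_N + ((2-β)/2) g^{(β-1)}_{N-1}`, and Bernoulli's inequality gives
`-g^{(μ)}_N ≥ μ (1 - μ) N^{-1-μ}` for `0 ≤ μ ≤ 1`. Altogether
`(-δ^β_{x,+} v, v) ≥ β (β-1) (2-β)/2 · L^{-β} ‖v‖²`.
-/

theorem gcoef_succ (γ : ℝ) (k : ℕ) : gcoef γ (k + 1) = (1 - (γ + 1) / (k + 1)) * gcoef γ k := rfl

theorem gcoef_succ_eq_neg_mul (γ : ℝ) (k : ℕ) :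
    gcoef γ (k + 1) = -(γ / (k + 1)) * gcoef (γ - 1) k := by
  induction k with
  | zero => simp [gcoef]
  | succ k ih =>
    rw [gcoef_succ, ih, gcoef_succ]
    push_cast
    field_simp
    ring

theorem sum_range_gcoef (γ : ℝ) (K : ℕ) : ∑ k ∈ range (K + 1), gcoef γ k = gcoef (γ - 1) K := by
  induction K with
  | zero => simp [gcoef]
  | succ K ih =>
    rw [sum_range_succ, ih, gcoef_succ_eq_neg_mul, gcoef_succ]
    field_simp
    ring

theorem sum_range_wcoef (γ : ℝ) (K : ℕ) :
    ∑ k ∈ range (K + 2), wcoef γ k =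
      γ / 2 * gcoef (γ - 1) (K + 1) + (2 - γ) / 2 * gcoef (γ - 1) K := by
  rw [← sum_range_gcoef, ← sum_range_gcoef, sum_range_succ' _ (K + 1),
    sum_range_succ' (gcoef γ) (K + 1)]
  simp only [wcoef, sum_add_distrib, ← mul_sum]
  ring

theorem gcoef_nonneg {γ : ℝ} (hγ1 : 1 ≤ γ) (hγ2 : γ ≤ 2) {k : ℕ} (hk : 2 ≤ k) : 0 ≤ gcoef γ k := by
  induction k, hk using Nat.le_induction with
  | base => simp only [gcoef]; push_cast; nlinarith
  | succ k hk ih =>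
    rw [gcoef_succ]
    have : (γ + 1) / (k + 1) ≤ 1 := by
      rw [div_le_one (by positivity)]
      have : (2 : ℝ) ≤ k := by exact_mod_cast hk
      linarith
    exact mul_nonneg (by linarith) ih

theorem gcoef_nonpos {μ : ℝ} (hμ0 : 0 ≤ μ) (hμ1 : μ ≤ 1) {k : ℕ} (hk : 1 ≤ k) : gcoef μ k ≤ 0 := by
  induction k, hk using Nat.le_induction with
  | base => simp only [gcoef]; push_cast; linarith
  | succ k hk ih =>
    rw [gcoef_succ]
    have : (μ + 1) / (k + 1) ≤ 1 := by
      rw [div_le_one (by positivity)]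
      have : (1 : ℝ) ≤ k := by exact_mod_cast hk
      linarith
    exact mul_nonpos_of_nonneg_of_nonpos (by linarith) ih

theorem wcoef_nonneg {γ : ℝ} (hγ1 : 1 ≤ γ) (hγ2 : γ ≤ 2) {k : ℕ} (hk : 3 ≤ k) : 0 ≤ wcoef γ k := by
  obtain ⟨k, rfl⟩ : ∃ m, k = m + 1 := ⟨k - 1, by omega⟩
  have := gcoef_nonneg hγ1 hγ2 (k := k + 1) (by omega)
  have := gcoef_nonneg hγ1 hγ2 (k := k) (by omega)
  simp only [wcoef]
  have : 0 ≤ 2 - γ := by linarith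
  positivity

theorem wcoef_zero_add_wcoef_two_nonneg {γ : ℝ} (hγ : 1 ≤ γ) : 0 ≤ wcoef γ 0 + wcoef γ 2 := by
  have : wcoef γ 0 + wcoef γ 2 = γ * (γ + 2) * (γ - 1) / 4 := by
    simp only [wcoef, gcoef]; push_cast; ring
  rw [this]
  have : 0 ≤ γ - 1 := by linarith
  positivity

-- Each step multiplies `-g` by `(K + 2 - μ) / (K + 3)`; Bernoulli's inequality
-- `((K + 1) / (K + 2)) ^ μ ≤ 1 - μ / (K + 2)` shows that the bound keeps up.
theorem neg_gcoef_add_two_ge {μ : ℝ} (hμ0 : 0 ≤ μ) (hμ1 : μ ≤ 1) (K : ℕ) :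
    μ * (1 - μ) * ((K : ℝ) + 1) ^ (-μ) / (K + 2) ≤ -gcoef μ (K + 2) := by
  induction K with
  | zero =>
    refine le_of_eq ?_
    simp [gcoef]
    ring
  | succ K ih =>
    have hK : (0 : ℝ) < K + 1 := by positivity
    have hbern : (((K : ℝ) + 1) / (K + 2)) ^ μ ≤ (K + 2 - μ) / (K + 2) := by
      have := rpow_one_add_le_one_add_mul_self (s := -1 / ((K : ℝ) + 2))
        (by rw [neg_div, neg_le_neg_iff, div_le_one (by positivity)]; linarith) hμ0 hμ1
      convert this using 2 <;> field_simp <;> ring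
    rw [Real.div_rpow hK.le (by positivity),
      div_le_div_iff₀ (by positivity) (by positivity)] at hbern
    have hstep : ((K : ℝ) + 2) ^ (-μ) * (K + 2) ≤ (K + 2 - μ) * ((K : ℝ) + 1) ^ (-μ) := by
      rw [Real.rpow_neg hK.le, Real.rpow_neg (by positivity), inv_mul_le_iff₀ (by positivity),
        ← mul_assoc, le_mul_inv_iff₀ (by positivity)]
      linarith
    have hc : 0 ≤ μ * (1 - μ) := mul_nonneg hμ0 (by linarith)
    rw [gcoef_succ]
    push_cast
    calc μ * (1 - μ) * ((K : ℝ) + 1 + 1) ^ (-μ) / (K + 1 + 2)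
        = μ * (1 - μ) * (((K : ℝ) + 2) ^ (-μ) * (K + 2)) / ((K + 2) * (K + 3)) := by
          field_simp; ring_nf
      _ ≤ μ * (1 - μ) * ((K + 2 - μ) * ((K : ℝ) + 1) ^ (-μ)) / ((K + 2) * (K + 3)) := by
          gcongr
      _ = (K + 2 - μ) / (K + 3) * (μ * (1 - μ) * ((K : ℝ) + 1) ^ (-μ) / (K + 2)) := by
          field_simp
      _ ≤ (K + 2 - μ) / (K + 3) * -gcoef μ (K + 2) := by
          have : (0 : ℝ) ≤ K := K.cast_nonneg
          exact mul_le_mul_of_nonneg_left ih (div_nonneg (by linarith) (by positivity))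
      _ = -((1 - (μ + 1) / ((K : ℝ) + 2 + 1)) * gcoef μ (K + 2)) := by
          field_simp; ring

theorem neg_gcoef_ge_rpow {μ : ℝ} (hμ0 : 0 ≤ μ) (hμ1 : μ ≤ 1) {K : ℕ} (hK : 2 ≤ K) :
    μ * (1 - μ) * (K : ℝ) ^ (-(μ + 1)) ≤ -gcoef μ K := by
  obtain ⟨K, rfl⟩ : ∃ m, K = m + 2 := ⟨K - 2, by omega⟩
  have : 0 ≤ μ * (1 - μ) := mul_nonneg hμ0 (by linarith)
  calc μ * (1 - μ) * ((K + 2 : ℕ) : ℝ) ^ (-(μ + 1))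
      = μ * (1 - μ) * ((K : ℝ) + 2) ^ (-μ) / (K + 2) := by
        push_cast
        rw [neg_add, Real.rpow_add (by positivity), Real.rpow_neg_one]
        ring
    _ ≤ μ * (1 - μ) * ((K : ℝ) + 1) ^ (-μ) / (K + 2) := by
        gcongr μ * (1 - μ) * ?_ / _
        exact Real.rpow_le_rpow_of_nonpos (by positivity) (by linarith) (by linarith)
    _ ≤ -gcoef μ (K + 2) := neg_gcoef_add_two_ge hμ0 hμ1 K

theorem sum_range_wcoef_le_neg_rpow {β : ℝ} (hβ1 : 1 ≤ β) (hβ2 : β ≤ 2) {N : ℕ} (hN : 2 ≤ N) :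
    ∑ k ∈ range (N + 1), wcoef β k ≤ -(β * (β - 1) * (2 - β) / 2 * (N : ℝ) ^ (-β)) := by
  obtain ⟨m, rfl⟩ : ∃ m, N = m + 1 := ⟨N - 1, by omega⟩
  rw [sum_range_wcoef]
  have hlast := neg_gcoef_ge_rpow (μ := β - 1) (by linarith) (by linarith) (K := m + 1) (by omega)
  have hprev := gcoef_nonpos (μ := β - 1) (by linarith) (by linarith) (k := m) (by omega)
  rw [sub_add_cancel, show 1 - (β - 1) = 2 - β by ring] at hlast
  have : 0 ≤ 2 - β := by linarith
  nlinarith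

theorem sum_sum_mul_mul_le {ι : Type*} (s : Finset ι) (a : ι → ι → ℝ) (v : ι → ℝ)
    (ha : ∀ i ∈ s, ∀ j ∈ s, i ≠ j → 0 ≤ a i j + a j i) :
    ∑ i ∈ s, ∑ j ∈ s, a i j * v i * v j ≤ ∑ i ∈ s, (∑ j ∈ s, (a i j + a j i)) / 2 * v i ^ 2 := by
  have hsq : 0 ≤ ∑ i ∈ s, ∑ j ∈ s, (a i j + a j i) * (v i - v j) ^ 2 := by
    refine sum_nonneg fun i hi => sum_nonneg fun j hj => ?_
    rcases eq_or_ne i j with rfl | hij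
    · simp
    · exact mul_nonneg (ha i hi j hj hij) (sq_nonneg _)
  have hexpand : ∑ i ∈ s, ∑ j ∈ s, (a i j + a j i) * (v i - v j) ^ 2 =
      ∑ i ∈ s, ∑ j ∈ s, (a i j + a j i) * v i ^ 2 + ∑ i ∈ s, ∑ j ∈ s, (a i j + a j i) * v j ^ 2
        - 2 * ∑ i ∈ s, ∑ j ∈ s, a i j * v i * v j - 2 * ∑ i ∈ s, ∑ j ∈ s, a j i * v i * v j := by
    simp only [mul_sum, ← sum_add_distrib, ← sum_sub_distrib]
    exact sum_congr rfl fun i _ => sum_congr rfl fun j _ => by ring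
  have hswap_sq : ∑ i ∈ s, ∑ j ∈ s, (a i j + a j i) * v j ^ 2 =
      ∑ i ∈ s, ∑ j ∈ s, (a i j + a j i) * v i ^ 2 := by
    rw [sum_comm]
    exact sum_congr rfl fun i _ => sum_congr rfl fun j _ => by ring
  have hswap : ∑ i ∈ s, ∑ j ∈ s, a j i * v i * v j = ∑ i ∈ s, ∑ j ∈ s, a i j * v i * v j := by
    rw [sum_comm]
    exact sum_congr rfl fun i _ => sum_congr rfl fun j _ => by ring
  have hrhs : ∑ i ∈ s, (∑ j ∈ s, (a i j + a j i)) / 2 * v i ^ 2 =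
      (∑ i ∈ s, ∑ j ∈ s, (a i j + a j i) * v i ^ 2) / 2 := by
    simp only [sum_div, sum_mul]
    exact sum_congr rfl fun i _ => sum_congr rfl fun j _ => by ring
  linarith

noncomputable def dplusMat (γ : ℝ) (i j : ℕ) : ℝ := if j ≤ i + 1 then wcoef γ (i + 1 - j) else 0

theorem sum_range_wcoef_mul_sub_eq (γ : ℝ) (v : ℕ → ℝ) {N i : ℕ} (hi : i + 1 ≤ N) :
    ∑ k ∈ range (i + 2), wcoef γ k * v (i + 1 - k) =
      ∑ j ∈ range (N + 1), dplusMat γ i j * v j := by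
  rw [← sum_subset (range_subset_range.2 (by omega : i + 2 ≤ N + 1)), ← sum_range_reflect]
  · refine sum_congr rfl fun k hk => ?_
    have hk := mem_range.1 hk
    rw [dplusMat, if_pos (by omega), show i + 1 - (i + 2 - 1 - k) = k by omega,
      show i + 2 - 1 - k = i + 1 - k by omega]
  · intro j _ hj
    rw [dplusMat, if_neg (by simp at hj; omega), zero_mul]

theorem sum_range_wcoef_mul_add_eq (γ : ℝ) (v : ℕ → ℝ) {N i : ℕ} (hi : 1 ≤ i) (hiN : i ≤ N) :
    ∑ k ∈ range (N - i + 2), wcoef γ k * v (i + k - 1) =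
      ∑ j ∈ range (N + 1), dplusMat γ j i * v j := by
  have hlow : ∑ j ∈ range (i - 1), dplusMat γ j i * v j = 0 := sum_eq_zero fun j hj => by
    rw [dplusMat, if_neg (by simp at hj; omega), zero_mul]
  rw [show N + 1 = (i - 1) + (N - i + 2) by omega, sum_range_add _ (i - 1), hlow, zero_add]
  refine sum_congr rfl fun k _ => ?_
  rw [dplusMat, if_pos (by omega), show i - 1 + k + 1 - i = k by omega,
    show i - 1 + k = i + k - 1 by omega]

theorem sum_Icc_mul_eq_sum_range {N : ℕ} (f v : ℕ → ℝ) (h0 : v 0 = 0) (hN : v N = 0) :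
    ∑ i ∈ Icc 1 (N - 1), f i * v i = ∑ i ∈ range (N + 1), f i * v i := by
  refine sum_subset (fun i hi => by simp at hi ⊢; omega) fun i hi hi' => ?_
  obtain rfl | rfl : i = 0 ∨ i = N := by simp at hi hi'; omega
  · rw [h0, mul_zero]
  · rw [hN, mul_zero]

theorem ip_neg_dplus (γ h : ℝ) {N : ℕ} {v : ℕ → ℝ} (h0 : v 0 = 0) (hN : v N = 0) :
    ip N h (fun i => -dplus γ h v i) v =
      -(h * h ^ (-γ)) * ∑ i ∈ range (N + 1), ∑ j ∈ range (N + 1), dplusMat γ i j * v i * v j := by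
  have hrow : ∀ i ∈ Icc 1 (N - 1), -dplus γ h v i * v i =
      (-h ^ (-γ) * ∑ j ∈ range (N + 1), dplusMat γ i j * v j) * v i := fun i hi => by
    rw [dplus, sum_range_wcoef_mul_sub_eq γ v (N := N) (by simp at hi; omega)]
    ring
  rw [ip, sum_congr rfl hrow, sum_Icc_mul_eq_sum_range _ _ h0 hN]
  simp only [mul_sum, sum_mul]
  exact sum_congr rfl fun i _ => sum_congr rfl fun j _ => by ring

theorem ip_neg_dminus (γ h : ℝ) {N : ℕ} {v : ℕ → ℝ} (h0 : v 0 = 0) (hN : v N = 0) :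
    ip N h (fun i => -dminus γ N h v i) v =
      -(h * h ^ (-γ)) * ∑ i ∈ range (N + 1), ∑ j ∈ range (N + 1), dplusMat γ i j * v i * v j := by
  have hrow : ∀ i ∈ Icc 1 (N - 1), -dminus γ N h v i * v i =
      (-h ^ (-γ) * ∑ j ∈ range (N + 1), dplusMat γ j i * v j) * v i := fun i hi => by
    simp only [mem_Icc] at hi
    rw [dminus, sum_range_wcoef_mul_add_eq γ v hi.1 (by omega)]
    ring
  rw [ip, sum_congr rfl hrow, sum_Icc_mul_eq_sum_range _ _ h0 hN]
  simp only [mul_sum, sum_mul]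
  rw [sum_comm]
  exact sum_congr rfl fun i _ => sum_congr rfl fun j _ => by ring

theorem dplusMat_add_dplusMat_nonneg {γ : ℝ} (hγ1 : 1 ≤ γ) (hγ2 : γ ≤ 2) {i j : ℕ} (hij : i ≠ j) :
    0 ≤ dplusMat γ i j + dplusMat γ j i := by
  wlog hji : j < i generalizing i j
  · rw [add_comm]
    exact this hij.symm (by omega)
  rcases Nat.lt_or_ge (j + 1) i with hfar | hnear
  · rw [dplusMat, dplusMat, if_pos (by omega), if_neg (by omega), add_zero]
    exact wcoef_nonneg hγ1 hγ2 (by omega)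
  · obtain rfl : i = j + 1 := by omega
    rw [dplusMat, dplusMat, if_pos (by omega), if_pos (by omega), Nat.sub_self,
      show j + 1 + 1 - j = 2 by omega, add_comm]
    exact wcoef_zero_add_wcoef_two_nonneg hγ1

theorem sum_range_wcoef_mono {γ : ℝ} (hγ1 : 1 ≤ γ) (hγ2 : γ ≤ 2) {m n : ℕ} (hm : 3 ≤ m)
    (hmn : m ≤ n) : ∑ k ∈ range m, wcoef γ k ≤ ∑ k ∈ range n, wcoef γ k :=
  sum_le_sum_of_subset_of_nonneg (range_subset_range.2 hmn) fun k _ hk =>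
    wcoef_nonneg hγ1 hγ2 (by simp at hk; omega)

-- Summing also over the boundary indices `0` and `N`, where `v` vanishes, turns every row and
-- column sum of `dplusMat` into a full partial sum `∑ k ∈ range m, wcoef β k` with `3 ≤ m ≤ N + 1`.
theorem sum_sum_dplusMat_mul_mul_le {β : ℝ} (hβ1 : 1 ≤ β) (hβ2 : β ≤ 2) {N : ℕ} {v : ℕ → ℝ}
    (h0 : v 0 = 0) (hN : v N = 0) :
    ∑ i ∈ range (N + 1), ∑ j ∈ range (N + 1), dplusMat β i j * v i * v j ≤
      (∑ k ∈ range (N + 1), wcoef β k) * ∑ i ∈ range (N + 1), v i ^ 2 := by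
  refine (sum_sum_mul_mul_le _ _ v fun i _ j _ hij =>
    dplusMat_add_dplusMat_nonneg hβ1 hβ2 hij).trans ?_
  rw [mul_sum]
  refine sum_le_sum fun i hi => ?_
  by_cases hbd : i = 0 ∨ i = N
  · obtain rfl | rfl := hbd <;> simp [h0, hN]
  have hi : 1 ≤ i ∧ i ≤ N - 1 := by simp at hi; omega
  have hrow := sum_range_wcoef_mul_sub_eq β (fun _ => 1) (N := N) (i := i) (by omega)
  have hcol := sum_range_wcoef_mul_add_eq β (fun _ => 1) (N := N) hi.1 (by omega)
  simp only [mul_one] at hrow hcol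
  rw [sum_add_distrib, ← hrow, ← hcol]
  have := sum_range_wcoef_mono hβ1 hβ2 (m := i + 2) (n := N + 1) (by omega) (by omega)
  have := sum_range_wcoef_mono hβ1 hβ2 (m := N - i + 2) (n := N + 1) (by omega) (by omega)
  exact mul_le_mul_of_nonneg_right (by linarith) (sq_nonneg _)

theorem ip_self_eq {N : ℕ} (h : ℝ) {v : ℕ → ℝ} (h0 : v 0 = 0) (hN : v N = 0) :
    ip N h v v = h * ∑ i ∈ range (N + 1), v i ^ 2 := by
  simp only [ip, sum_Icc_mul_eq_sum_range v v h0 hN, sq]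

theorem ip_self_pos {N : ℕ} {h : ℝ} (hh : 0 < h) {v : ℕ → ℝ} (h0 : v 0 = 0) (hN : v N = 0)
    (hv : ∃ i ≤ N, v i ≠ 0) : 0 < ip N h v v := by
  obtain ⟨i, hiN, hi⟩ := hv
  rw [ip_self_eq h h0 hN]
  exact mul_pos hh (sum_pos' (fun _ _ => sq_nonneg _)
    ⟨i, mem_range.2 (by omega), by positivity⟩)

theorem gnorm_sq {N : ℕ} {h : ℝ} (hh : 0 ≤ h) (v : ℕ → ℝ) : gnorm N h v ^ 2 = ip N h v v :=
  Real.sq_sqrt (mul_nonneg hh (sum_nonneg fun _ _ => mul_self_nonneg _))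

theorem ip_neg_dplus_ge {β : ℝ} (hβ1 : 1 ≤ β) (hβ2 : β ≤ 2) {N : ℕ} (hN2 : 2 ≤ N) {h : ℝ}
    (hh : 0 ≤ h) {v : ℕ → ℝ} (h0 : v 0 = 0) (hN : v N = 0) :
    β * (β - 1) * (2 - β) / 2 * (N * h) ^ (-β) * ip N h v v ≤
      ip N h (fun i => -dplus β h v i) v := by
  have hquad := sum_sum_dplusMat_mul_mul_le hβ1 hβ2 h0 hN
  have hsum := sum_range_wcoef_le_neg_rpow hβ1 hβ2 hN2
  have hP : 0 ≤ ∑ i ∈ range (N + 1), v i ^ 2 := sum_nonneg fun _ _ => sq_nonneg _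
  have hscale : 0 ≤ h * h ^ (-β) := mul_nonneg hh (Real.rpow_nonneg hh _)
  rw [ip_neg_dplus β h h0 hN, ip_self_eq h h0 hN, Real.mul_rpow (Nat.cast_nonneg N) hh]
  calc β * (β - 1) * (2 - β) / 2 * ((N : ℝ) ^ (-β) * h ^ (-β)) * (h * ∑ i ∈ range (N + 1), v i ^ 2)
      = h * h ^ (-β) * (β * (β - 1) * (2 - β) / 2 * (N : ℝ) ^ (-β) *
          ∑ i ∈ range (N + 1), v i ^ 2) := by ring
    _ ≤ h * h ^ (-β) * (-(∑ k ∈ range (N + 1), wcoef β k) * ∑ i ∈ range (N + 1), v i ^ 2) := by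
        gcongr
        linarith
    _ ≤ h * h ^ (-β) * -∑ i ∈ range (N + 1), ∑ j ∈ range (N + 1), dplusMat β i j * v i * v j := by
        gcongr
        linarith
    _ = _ := by ring

theorem stmt14 (β L : ℝ) (hβ1 : 1 < β) (hβ2 : β < 2) (hL : 0 < L) :
    ∃ c₂ : ℝ, 0 < c₂ ∧ ∀ N : ℕ, 3 ≤ N → ∀ v : ℕ → ℝ,
      v 0 = 0 → v N = 0 → (∃ i ≤ N, v i ≠ 0) →
      ip N (L / N) (fun i => -dplus β (L / N) v i) v =
        ip N (L / N) (fun i => -dminus β N (L / N) v i) v ∧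
      c₂ * Real.log 2 * (gnorm N (L / N) v) ^ 2 <
        ip N (L / N) (fun i => -dplus β (L / N) v i) v := by
  set A := β * (β - 1) * (2 - β) / 2 * L ^ (-β)
  have hA : 0 < A := by
    have : 0 < β - 1 := by linarith
    have : 0 < 2 - β := by linarith
    have := Real.rpow_pos_of_pos hL (-β)
    positivity
  have hlog2 : 0 < Real.log 2 := Real.log_pos one_lt_two
  refine ⟨A / (2 * Real.log 2), by positivity, fun N hN v h0 hvN hv => ⟨?_, ?_⟩⟩
  · rw [ip_neg_dplus β _ h0 hvN, ip_neg_dminus β _ h0 hvN]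
  have hN0 : (N : ℝ) ≠ 0 := by positivity
  have hh : 0 < L / N := by positivity
  have hbound := ip_neg_dplus_ge hβ1.le hβ2.le (by omega : 2 ≤ N) hh.le h0 hvN
  rw [mul_div_cancel₀ L hN0] at hbound
  have hpos := ip_self_pos hh h0 hvN hv
  rw [gnorm_sq hh.le]
  calc A / (2 * Real.log 2) * Real.log 2 * ip N (L / N) v v = A / 2 * ip N (L / N) v v := by
        field_simp
    _ < A * ip N (L / N) v v := by linarith [mul_pos hA hpos]
    _ ≤ _ := hbound
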